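/- With sind φ as above and φ⁰(x) ↔ ∀ y, y ≼ x → φ(y), define φ¹(x) ↔ ∀ y, φ⁰(y) → φ⁰(x ⊕ y). Then sind φ implies φ¹ is closed under concatenation: φ¹(x₁) ∧ φ¹(x₂) → φ¹(x₁ ⊕ x₂), and also φ¹(x) → φ⁰(x). -/
import Mathlib

def Z (x : List Bool) : List Bool := List.replicate x.length false

def ple (x y : List Bool) : Prop := ∃ z, Z z ++ Z x = Z y

def sind (φ : List Bool → Prop) : Prop :=
  φ [] ∧ ∀ x, φ x → φ (false :: x) ∧ φ (true :: x)

def phi0 (φ : List Bool → Prop) (x : List Bool) : Prop := ∀ y, ple y x → φ y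

def phi1 (φ : List Bool → Prop) (x : List Bool) : Prop :=
  ∀ y, phi0 φ y → phi0 φ (x ++ y)

theorem phi1_props (φ : List Bool → Prop) (h : sind φ) :
    (∀ x₁ x₂, phi1 φ x₁ → phi1 φ x₂ → phi1 φ (x₁ ++ x₂)) ∧
    (∀ x, phi1 φ x → phi0 φ x) := by
  have hnil : phi0 φ [] := by
    intro y ⟨z, hz⟩
    have : y = [] := by
      have := congrArg List.length hz
      simp [Z] at this
      exact this.2
    simpa [this] using h.1
  constructor
  · intro x₁ x₂ h1 h2 y hy
    have := h1 (x₂ ++ y) (h2 y hy)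
    simpa [List.append_assoc] using this
  · intro x hx
    simpa using hx [] hnil
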